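/- Let Ω ⊆ ℝⁿ be open, ψ : Ω → ℝ^{n+2} and τ : Ω → ℝ differentiable with |ψ(x)| = 1 for all x, and set φ̄ = (ψ, τ) : Ω → ℝ^{n+3}. Assume that for each x the bilinear form (X, Y) ↦ η(Dφ̄(x)X, Dφ̄(x)Y) is positive definite (φ̄ is a spacelike immersion into S^{n+1} × ℝ). Let ν : Ω → ℝ^{n+2} be differentiable with |ν(x)| = 1, ⟨ψ(x), ν(x)⟩₀ = 0, and ⟨Dψ(x)X, ν(x)⟩₀ = Dτ(x)X for all X (so (ν, 1) is a normalized null normal field along φ̄). Define φ := cos(τ)ψ − sin(τ)ν and ν_φ := sin(τ)ψ + cos(τ)ν. Then for every x ∈ Ω the linear map X ↦ (Dφ(x)X, Dν_φ(x)X) is injective. -/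

import Mathlib

open scoped RealInnerProductSpace BigOperators

noncomputable section

/-- Euclidean space `ℝ^n`. -/
abbrev E (n : ℕ) := EuclideanSpace ℝ (Fin n)

/-- The Lorentzian form on `ℝ^{n+3} = ℝ^{n+2} × ℝ`: `η((u,s),(v,t)) = ⟨u,v⟩₀ − s·t`;
this is the metric of `S^{n+1} × ℝ`. -/
def etaS (n : ℕ) (u v : E (n + 2) × ℝ) : ℝ := ⟪u.1, v.1⟫ - u.2 * v.2

/-- Let `φ̄ = (ψ, τ)` be a spacelike immersion of an open `Ω ⊆ ℝⁿ` into `S^{n+1} × ℝ`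
(`|ψ| = 1`), and `(ν, 1)` a normalized null normal field (`|ν| = 1`, `⟨ψ,ν⟩₀ = 0`,
`⟨Dψ X, ν⟩₀ = Dτ X`). With `φ := cos(τ)ψ − sin(τ)ν` and `ν_φ := sin(τ)ψ + cos(τ)ν`, the map
`X ↦ (Dφ(x)X, Dν_φ(x)X)` is injective for every `x ∈ Ω`. -/
theorem statement13 (n : ℕ) (Ω : Set (E n)) (hΩ : IsOpen Ω)
    (ψ : E n → E (n + 2)) (τ : E n → ℝ) (ν : E n → E (n + 2))
    (hψ : ∀ x ∈ Ω, DifferentiableAt ℝ ψ x)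
    (hτ : ∀ x ∈ Ω, DifferentiableAt ℝ τ x)
    (hν : ∀ x ∈ Ω, DifferentiableAt ℝ ν x)
    (hψunit : ∀ x ∈ Ω, ‖ψ x‖ = 1)
    (hspace : ∀ x ∈ Ω, ∀ X : E n, X ≠ 0 →
      0 < etaS n (fderiv ℝ (fun y => (ψ y, τ y)) x X)
            (fderiv ℝ (fun y => (ψ y, τ y)) x X))
    (hνunit : ∀ x ∈ Ω, ‖ν x‖ = 1)
    (hψν : ∀ x ∈ Ω, ⟪ψ x, ν x⟫ = 0)
    (hnormal : ∀ x ∈ Ω, ∀ X : E n, ⟪fderiv ℝ ψ x X, ν x⟫ = fderiv ℝ τ x X) :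
    ∀ x ∈ Ω, Function.Injective (fun X : E n =>
      (fderiv ℝ (fun y => Real.cos (τ y) • ψ y - Real.sin (τ y) • ν y) x X,
       fderiv ℝ (fun y => Real.sin (τ y) • ψ y + Real.cos (τ y) • ν y) x X)) := by
  
  intro x hx X Y hXY
  have hψ' := (hψ x hx).hasFDerivAt
  have hτ' := (hτ x hx).hasFDerivAt
  have hν' := (hν x hx).hasFDerivAt
  set Dψ := fderiv ℝ ψ x
  set Dτ := fderiv ℝ τ x
  set Dν := fderiv ℝ ν x
  set c := Real.cos (τ x) with hc0
  set s := Real.sin (τ x) with hs0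
  have hcc : HasFDerivAt (fun y => Real.cos (τ y)) ((-s) • Dτ) x :=
    (Real.hasDerivAt_cos (τ x)).comp_hasFDerivAt x hτ'
  have hss : HasFDerivAt (fun y => Real.sin (τ y)) (c • Dτ) x :=
    (Real.hasDerivAt_sin (τ x)).comp_hasFDerivAt x hτ'
  have hφ : HasFDerivAt (fun y => Real.cos (τ y) • ψ y - Real.sin (τ y) • ν y)
      ((c • Dψ + ((-s) • Dτ).smulRight (ψ x)) - (s • Dν + (c • Dτ).smulRight (ν x))) x :=
    (hcc.smul hψ').sub (hss.smul hν')
  have hνφ : HasFDerivAt (fun y => Real.sin (τ y) • ψ y + Real.cos (τ y) • ν y)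
      ((s • Dψ + (c • Dτ).smulRight (ψ x)) + (c • Dν + ((-s) • Dτ).smulRight (ν x))) x :=
    (hss.smul hψ').add (hcc.smul hν')
  set Z := X - Y with hZ
  simp only [Prod.mk.injEq] at hXY
  have e1 : fderiv ℝ (fun y => Real.cos (τ y) • ψ y - Real.sin (τ y) • ν y) x Z = 0 := by
    rw [hZ, map_sub, hXY.1, sub_self]
  have e2 : fderiv ℝ (fun y => Real.sin (τ y) • ψ y + Real.cos (τ y) • ν y) x Z = 0 := by
    rw [hZ, map_sub, hXY.2, sub_self]
  rw [hφ.fderiv] at e1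
  rw [hνφ.fderiv] at e2
  simp only [ContinuousLinearMap.add_apply, ContinuousLinearMap.sub_apply,
    ContinuousLinearMap.neg_apply, ContinuousLinearMap.coe_smul', Pi.smul_apply,
    ContinuousLinearMap.smulRight_apply, smul_smul, neg_smul, smul_eq_mul] at e1 e2
  set t := Dτ Z with ht0
  set a := Dψ Z with ha0
  set b := Dν Z with hb0
  -- combine: c • e1 + s • e2 gives a = t • ν x
  have key : a - t • ν x = 0 := by
    have comb : c • (c • a + -((s * t) • ψ x) - (s • b + (c * t) • ν x))
        + s • (s • a + (c * t) • ψ x + (c • b + -((s * t) • ν x))) = 0 := by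
      rw [e1, e2]; simp
    have pyth : s ^ 2 + c ^ 2 = 1 := Real.sin_sq_add_cos_sq (τ x)
    rw [← comb]
    clear_value t a b c s
    match_scalars <;> ring_nf
    all_goals first | linear_combination -pyth | linear_combination t * pyth
  have key' : a = t • ν x := by rwa [sub_eq_zero] at key
  -- spacelike condition kills Z
  have hpair : HasFDerivAt (fun y => (ψ y, τ y)) (Dψ.prod Dτ) x := HasFDerivAt.prodMk hψ' hτ'
  by_contra hne
  have hZne : Z ≠ 0 := by
    intro h0
    exact hne (by rw [sub_eq_zero] at h0; rw [h0])
  have hpos := hspace x hx Z hZne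
  rw [hpair.fderiv] at hpos
  have hνν : ⟪ν x, ν x⟫ = 1 := by
    rw [real_inner_self_eq_norm_sq, hνunit x hx]; norm_num
  have : etaS n ((Dψ.prod Dτ) Z) ((Dψ.prod Dτ) Z) = 0 := by
    simp only [etaS, ContinuousLinearMap.prod_apply, ← ha0, ← ht0, key']
    rw [real_inner_smul_left, real_inner_smul_right, hνν]
    ring
  rw [this] at hpos
  exact lt_irrefl 0 hpos
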